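/- Let H be a real Hilbert space, K ⊆ H a nonempty closed convex set with metric projection π : H → H, and let 𝔸, ℂ : H → H be bounded symmetric linear operators with ℂ∘𝔸 = Id and 𝔸∘ℂ = Id, where ℂ is coercive with constant γ_ℂ > 0 and has operator norm ‖ℂ‖. Let λ > 0, T > 0, w ∈ L²(0,T;H), σ₀ ∈ K, and let σ_λ, σ : [0,T] → H be H¹(0,T;H)-curves with derivatives σ_λ', σ' and σ_λ(0) = σ(0) = σ₀, such that for almost every t ∈ (0,T): (i) 𝔸σ_λ'(t) = w(t) − λ⁻¹(σ_λ(t) − π(σ_λ(t))), and (ii) σ(t) ∈ K and ⟪w(t) − 𝔸σ'(t), τ − σ(t)⟫ ≤ 0 for all τ ∈ K. Then for every t ∈ [0,T]: ‖σ_λ(t) − σ(t)‖² ≤ λ (‖ℂ‖²/γ_ℂ) ∫₀ᵀ ‖w(s) − 𝔸σ'(s)‖² ds. -/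

import Mathlib

/-!
Write `e = σ_λ - σ`, `q = w - 𝔸σ'` and `d = σ_λ - π σ_λ`. Since `e(0) = 0` and `𝔸` is symmetric,
`⟪𝔸 e(t), e(t)⟫ = 2 ∫₀ᵗ ⟪𝔸 e'(s), e(s)⟫ ds`; this needs no pointwise differentiability, only
Fubini on the square `(0, t]²`. Almost everywhere `𝔸 e' = q - λ⁻¹ d`, and the two variational
inequalities (the projection tested at `σ ∈ K`, the flow rule tested at `π σ_λ ∈ K`) give
`⟪𝔸 e', e⟫ ≤ ‖q‖ ‖d‖ - λ⁻¹ ‖d‖² ≤ (λ/4) ‖q‖²`. Finally `ℂ = 𝔸⁻¹` is coercive, so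
`‖e‖² ≤ (‖ℂ‖²/γ_ℂ) ⟪𝔸 e, e⟫`.
-/

open RealInnerProductSpace MeasureTheory

/-- `σ : [0,T] → H` is an `H¹(0,T;H)`-curve with derivative `σ'`: the derivative is
Bochner measurable and square integrable on `(0,T)`, and
`σ(t) = σ(0) + ∫₀ᵗ σ'(s) ds` for all `t ∈ [0,T]`. -/
def IsH1Curve {H : Type*} [NormedAddCommGroup H] [NormedSpace ℝ H] [CompleteSpace H]
    (T : ℝ) (σ σ' : ℝ → H) : Prop :=
  MemLp σ' 2 (volume.restrict (Set.Ioo 0 T)) ∧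
    ∀ t ∈ Set.Icc 0 T, σ t = σ 0 + ∫ s in (0:ℝ)..t, σ' s

open Set

section PrimitiveBilinear

variable {E F G : Type*} [NormedAddCommGroup E] [NormedSpace ℝ E]
  [NormedAddCommGroup F] [NormedSpace ℝ F] [NormedAddCommGroup G] [NormedSpace ℝ G] {a b s : ℝ}

lemma setIntegral_Ioc_indicator_Iio {φ : ℝ → E} (hs : s ∈ Ioc a b) :
    ∫ r in Ioc a b, (Iio s).indicator φ r = ∫ r in a..s, φ r := by
  have hIoo : Ioc a b ∩ Iio s = Ioo a s := by
    ext r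
    simp only [mem_inter_iff, mem_Ioc, mem_Iio, mem_Ioo]
    exact ⟨fun h ↦ ⟨h.1.1, h.2⟩, fun h ↦ ⟨⟨h.1, h.2.le.trans hs.2⟩, h.2⟩⟩
  rw [setIntegral_indicator measurableSet_Iio, hIoo, intervalIntegral.integral_of_le hs.1.le,
    integral_Ioc_eq_integral_Ioo]

lemma setIntegral_Ioc_indicator_Iic {φ : ℝ → E} (hs : s ∈ Ioc a b) :
    ∫ r in Ioc a b, (Iic s).indicator φ r = ∫ r in a..s, φ r := by
  rw [setIntegral_indicator measurableSet_Iic, Ioc_inter_Iic, inf_eq_right.2 hs.2,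
    intervalIntegral.integral_of_le hs.1.le]

variable (B : E →L[ℝ] F →L[ℝ] G) {f : ℝ → E} {g : ℝ → F}

lemma integral_indicator_lt_bilin [CompleteSpace F] [CompleteSpace G]
    (hg : IntegrableOn g (Ioc a b)) (hs : s ∈ Ioc a b) :
    ∫ r in Ioc a b, {p : ℝ × ℝ | p.2 < p.1}.indicator (fun p ↦ B (f p.1) (g p.2)) (s, r) =
      B (f s) (∫ r in a..s, g r) := by
  have hgs : IntervalIntegrable g volume a s :=
    (intervalIntegrable_iff_integrableOn_Ioc_of_le hs.1.le).2
      (hg.mono_set (Ioc_subset_Ioc_right hs.2))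
  rw [← (B (f s)).intervalIntegral_comp_comm hgs, ← setIntegral_Ioc_indicator_Iio hs]
  rfl

lemma integral_indicator_not_lt_bilin [CompleteSpace E] [CompleteSpace G]
    (hf : IntegrableOn f (Ioc a b)) (hs : s ∈ Ioc a b) :
    ∫ r in Ioc a b, {p : ℝ × ℝ | p.2 < p.1}ᶜ.indicator (fun p ↦ B (f p.1) (g p.2)) (r, s) =
      B (∫ r in a..s, f r) (g s) := by
  have hfs : IntervalIntegrable f volume a s :=
    (intervalIntegrable_iff_integrableOn_Ioc_of_le hs.1.le).2
      (hf.mono_set (Ioc_subset_Ioc_right hs.2))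
  rw [← B.flip_apply, ← (B.flip (g s)).intervalIntegral_comp_comm hfs,
    ← setIntegral_Ioc_indicator_Iic hs]
  congr 1 with r
  simp [indicator_apply]

lemma integrableOn_bilin_primitive [CompleteSpace F] [CompleteSpace G]
    (hf : IntegrableOn f (Ioc a b)) (hg : IntegrableOn g (Ioc a b)) :
    IntegrableOn (fun s ↦ B (f s) (∫ r in a..s, g r)) (Ioc a b) := by
  have hP := (hf.op_fst_snd (by fun_prop) ⟨‖B‖, B.le_opNorm₂⟩ hg).indicator
    (measurableSet_lt measurable_snd measurable_fst)
  exact hP.integral_prod_left.congr <| (ae_restrict_mem measurableSet_Ioc).mono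
    fun s hs ↦ integral_indicator_lt_bilin B hg hs

/-- Integration by parts for primitives: split `(a, b]²` along the diagonal and apply Fubini's
theorem on each triangle. -/
theorem bilin_intervalIntegral_eq_integral_bilin_primitive_add
    [CompleteSpace E] [CompleteSpace F] [CompleteSpace G] (hab : a ≤ b)
    (hf : IntegrableOn f (Ioc a b)) (hg : IntegrableOn g (Ioc a b)) :
    B (∫ s in a..b, f s) (∫ s in a..b, g s) =
      (∫ s in a..b, B (f s) (∫ r in a..s, g r)) + ∫ s in a..b, B (∫ r in a..s, f r) (g s) := by
  set μ := volume.restrict (Ioc a b)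
  set P : ℝ × ℝ → G := fun p ↦ B (f p.1) (g p.2)
  set S := {p : ℝ × ℝ | p.2 < p.1}
  have hS : MeasurableSet S := measurableSet_lt measurable_snd measurable_fst
  have hP : Integrable P (μ.prod μ) := hf.op_fst_snd (by fun_prop) ⟨‖B‖, B.le_opNorm₂⟩ hg
  have hlower : ∫ p, S.indicator P p ∂μ.prod μ = ∫ s in a..b, B (f s) (∫ r in a..s, g r) := by
    rw [integral_prod _ (hP.indicator hS), intervalIntegral.integral_of_le hab]
    exact setIntegral_congr_fun measurableSet_Ioc fun s hs ↦ integral_indicator_lt_bilin B hg hs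
  have hupper : ∫ p, Sᶜ.indicator P p ∂μ.prod μ = ∫ s in a..b, B (∫ r in a..s, f r) (g s) := by
    rw [integral_prod_symm _ (hP.indicator hS.compl), intervalIntegral.integral_of_le hab]
    exact setIntegral_congr_fun measurableSet_Ioc
      fun s hs ↦ integral_indicator_not_lt_bilin B hf hs
  rw [intervalIntegral.integral_of_le hab, intervalIntegral.integral_of_le hab,
    ← integral_prod_bilin B hf hg, ← hlower, ← hupper,
    ← integral_add (hP.indicator hS) (hP.indicator hS.compl)]
  simp only [indicator_self_add_compl_apply, P, μ]

end PrimitiveBilinear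

section SymmetricForm

variable {E : Type*} [NormedAddCommGroup E] [NormedSpace ℝ E] [CompleteSpace E]
  {B : E →L[ℝ] E →L[ℝ] ℝ} {u : ℝ → E} {a b : ℝ}

theorem bilin_intervalIntegral_self_eq (hB : ∀ x y, B x y = B y x) (hab : a ≤ b)
    (hu : IntegrableOn u (Ioc a b)) :
    B (∫ s in a..b, u s) (∫ s in a..b, u s) = 2 * ∫ s in a..b, B (u s) (∫ r in a..s, u r) := by
  rw [bilin_intervalIntegral_eq_integral_bilin_primitive_add B hab hu hu, two_mul]
  congr 1
  exact intervalIntegral.integral_congr fun s _ ↦ hB _ _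

theorem bilin_intervalIntegral_self_le (hB : ∀ x y, B x y = B y x) (hab : a ≤ b)
    (hu : IntegrableOn u (Ioc a b)) {φ : ℝ → ℝ} (hφ : IntegrableOn φ (Ioc a b))
    (hle : ∀ᵐ s ∂volume.restrict (Ioc a b), B (u s) (∫ r in a..s, u r) ≤ φ s) :
    B (∫ s in a..b, u s) (∫ s in a..b, u s) ≤ 2 * ∫ s in a..b, φ s := by
  rw [bilin_intervalIntegral_self_eq hB hab hu, intervalIntegral.integral_of_le hab,
    intervalIntegral.integral_of_le hab]
  exact mul_le_mul_of_nonneg_left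
    (integral_mono_ae (integrableOn_bilin_primitive B hu hu) hφ hle) zero_le_two

end SymmetricForm

section Hilbert

variable {H : Type*} [NormedAddCommGroup H] [InnerProductSpace ℝ H]

theorem inner_sub_inv_smul_sub_le {x y p q : H} {lam : ℝ} (hlam : 0 < lam)
    (hp : ⟪x - p, y - p⟫ ≤ 0) (hq : ⟪q, p - y⟫ ≤ 0) :
    ⟪q - lam⁻¹ • (x - p), x - y⟫ ≤ lam / 4 * ‖q‖ ^ 2 := by
  set d := x - p
  have hdp : 0 ≤ ⟪d, p - y⟫ := by
    rw [← neg_sub y p, inner_neg_right]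
    linarith
  have young : ‖q‖ * ‖d‖ ≤ lam / 4 * ‖q‖ ^ 2 + lam⁻¹ * ‖d‖ ^ 2 := by
    have h := mul_nonneg (inv_nonneg.2 hlam.le) (sq_nonneg (lam / 2 * ‖q‖ - ‖d‖))
    have h' : lam⁻¹ * (lam / 2 * ‖q‖ - ‖d‖) ^ 2 =
        lam / 4 * ‖q‖ ^ 2 - ‖q‖ * ‖d‖ + lam⁻¹ * ‖d‖ ^ 2 := by
      field_simp
      ring
    linarith
  rw [← sub_add_sub_cancel x p y]
  calc ⟪q - lam⁻¹ • d, d + (p - y)⟫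
      = ⟪q, d⟫ + ⟪q, p - y⟫ - lam⁻¹ * (‖d‖ ^ 2 + ⟪d, p - y⟫) := by
        simp only [inner_sub_left, inner_add_right, real_inner_smul_left,
          real_inner_self_eq_norm_sq]
        ring
    _ ≤ ‖q‖ * ‖d‖ - lam⁻¹ * ‖d‖ ^ 2 := by
        have := mul_nonneg (inv_nonneg.2 hlam.le) hdp
        linarith [real_inner_le_norm q d]
    _ ≤ lam / 4 * ‖q‖ ^ 2 := by linarith

theorem norm_sq_le_of_coercive_left_inverse {A C : H →L[ℝ] H} (hCA : ∀ x, C (A x) = x)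
    {γ : ℝ} (hγ : 0 < γ) (hC : ∀ h, γ * ‖h‖ ^ 2 ≤ ⟪C h, h⟫) (x : H) :
    ‖x‖ ^ 2 ≤ ‖C‖ ^ 2 / γ * ⟪A x, x⟫ := by
  have hcoer : γ * ‖A x‖ ^ 2 ≤ ⟪A x, x⟫ := by simpa only [hCA, real_inner_comm] using hC (A x)
  have hbound : ‖x‖ ≤ ‖C‖ * ‖A x‖ := by simpa only [hCA] using C.le_opNorm (A x)
  calc ‖x‖ ^ 2 ≤ (‖C‖ * ‖A x‖) ^ 2 := pow_le_pow_left₀ (norm_nonneg _) hbound 2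
    _ = ‖C‖ ^ 2 / γ * (γ * ‖A x‖ ^ 2) := by field_simp
    _ ≤ ‖C‖ ^ 2 / γ * ⟪A x, x⟫ := by gcongr

theorem inner_map_intervalIntegral_self_le [CompleteSpace H] {A : H →L[ℝ] H}
    (hA : ∀ x y, ⟪A x, y⟫ = ⟪x, A y⟫) {u : ℝ → H} {φ : ℝ → ℝ} {a b : ℝ} (hab : a ≤ b)
    (hu : IntegrableOn u (Ioc a b)) (hφ : IntegrableOn φ (Ioc a b))
    (hle : ∀ᵐ s ∂volume.restrict (Ioc a b), ⟪A (u s), ∫ r in a..s, u r⟫ ≤ φ s) :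
    ⟪A (∫ s in a..b, u s), ∫ s in a..b, u s⟫ ≤ 2 * ∫ s in a..b, φ s :=
  bilin_intervalIntegral_self_le (B := innerSL ℝ ∘L A)
    (fun x y ↦ show ⟪A x, y⟫ = ⟪A y, x⟫ by rw [hA, real_inner_comm]) hab hu hφ hle

end Hilbert

namespace IsH1Curve

variable {H : Type*} [NormedAddCommGroup H] [NormedSpace ℝ H] [CompleteSpace H]
  {T t : ℝ} {σ σ' τ τ' : ℝ → H}

theorem memLp_Ioc (hσ : IsH1Curve T σ σ') : MemLp σ' 2 (volume.restrict (Ioc 0 T)) := by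
  simpa only [Measure.restrict_congr_set Ioo_ae_eq_Ioc] using hσ.1

theorem integrableOn_Ioc (hσ : IsH1Curve T σ σ') (ht : t ≤ T) : IntegrableOn σ' (Ioc 0 t) :=
  IntegrableOn.mono_set (hσ.memLp_Ioc.integrable one_le_two) (Ioc_subset_Ioc_right ht)

theorem sub (hσ : IsH1Curve T σ σ') (hτ : IsH1Curve T τ τ') :
    IsH1Curve T (σ - τ) (σ' - τ') := by
  refine ⟨hσ.1.sub hτ.1, fun t ht ↦ ?_⟩
  have hint {f f' : ℝ → H} (hf : IsH1Curve T f f') : IntervalIntegrable f' volume 0 t :=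
    (intervalIntegrable_iff_integrableOn_Ioc_of_le ht.1).2 (hf.integrableOn_Ioc ht.2)
  simp only [Pi.sub_apply]
  rw [hσ.2 t ht, hτ.2 t ht, intervalIntegral.integral_sub (hint hσ) (hint hτ)]
  abel

end IsH1Curve

theorem yosida_regularization_error_estimate_general
    {H : Type*} [NormedAddCommGroup H] [InnerProductSpace ℝ H] [CompleteSpace H]
    (K : Set H)
    (π : H → H) (hπK : ∀ x, π x ∈ K)
    (hπ : ∀ x, ∀ k ∈ K, ⟪x - π x, k - π x⟫ ≤ 0)
    (A C : H →L[ℝ] H)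
    (hAsym : ∀ x y, ⟪A x, y⟫ = ⟪x, A y⟫)
    (hCA : ∀ x, C (A x) = x)
    (γC : ℝ) (hγC : 0 < γC) (hCcoer : ∀ h : H, γC * ‖h‖ ^ 2 ≤ ⟪C h, h⟫)
    (lam T : ℝ) (hlam : 0 < lam)
    (w : ℝ → H) (hw : MemLp w 2 (volume.restrict (Set.Ioo 0 T)))
    (σ₀ : H)
    (σlam σ σlam' σ' : ℝ → H)
    (hσlam : IsH1Curve T σlam σlam') (hσ : IsH1Curve T σ σ')
    (hinitlam : σlam 0 = σ₀) (hinit : σ 0 = σ₀)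
    (heqlam : ∀ᵐ t ∂(volume.restrict (Set.Ioo 0 T)),
      A (σlam' t) = w t - lam⁻¹ • (σlam t - π (σlam t)))
    (heq : ∀ᵐ t ∂(volume.restrict (Set.Ioo 0 T)),
      σ t ∈ K ∧ ∀ τ ∈ K, ⟪w t - A (σ' t), τ - σ t⟫ ≤ 0) :
    ∀ t ∈ Set.Icc 0 T,
      ‖σlam t - σ t‖ ^ 2 ≤
        lam * (‖C‖ ^ 2 / γC) * ∫ s in (0:ℝ)..T, ‖w s - A (σ' s)‖ ^ 2 := by
  rintro t ⟨ht0, htT⟩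
  set q : ℝ → H := fun s ↦ w s - A (σ' s)
  rw [Measure.restrict_congr_set Ioo_ae_eq_Ioc] at hw heqlam heq
  have he := hσlam.sub hσ
  have he_eq : ∀ s ∈ Icc 0 T, σlam s - σ s = ∫ r in (0:ℝ)..s, (σlam' - σ') r := fun s hs ↦ by
    simpa [hinitlam, hinit] using he.2 s hs
  have hq : IntegrableOn (fun s ↦ ‖q s‖ ^ 2) (Ioc 0 T) :=
    have hq2 := hw.sub (A.comp_memLp' hσ.memLp_Ioc)
    (memLp_two_iff_integrable_sq_norm hq2.1).1 hq2
  have hpointwise : ∀ᵐ s ∂volume.restrict (Ioc 0 t),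
      ⟪A ((σlam' - σ') s), ∫ r in (0:ℝ)..s, (σlam' - σ') r⟫ ≤ lam / 4 * ‖q s‖ ^ 2 := by
    filter_upwards [ae_restrict_of_ae_restrict_of_subset (Ioc_subset_Ioc_right htT) heqlam,
      ae_restrict_of_ae_restrict_of_subset (Ioc_subset_Ioc_right htT) heq,
      ae_restrict_mem measurableSet_Ioc] with s hAs ⟨hσK, hflow⟩ hs
    have hAu : A ((σlam' - σ') s) = q s - lam⁻¹ • (σlam s - π (σlam s)) := by
      simp only [Pi.sub_apply, map_sub, hAs, q]
      abel
    rw [← he_eq s ⟨hs.1.le, hs.2.trans htT⟩, hAu]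
    exact inner_sub_inv_smul_sub_le hlam (hπ _ _ hσK) (hflow _ (hπK _))
  have henergy : ⟪A (σlam t - σ t), σlam t - σ t⟫ ≤ lam / 2 * ∫ s in (0:ℝ)..T, ‖q s‖ ^ 2 :=
    calc ⟪A (σlam t - σ t), σlam t - σ t⟫ ≤ 2 * ∫ s in (0:ℝ)..t, lam / 4 * ‖q s‖ ^ 2 := by
          rw [he_eq t ⟨ht0, htT⟩]
          exact inner_map_intervalIntegral_self_le hAsym ht0 (he.integrableOn_Ioc htT)
            ((hq.mono_set (Ioc_subset_Ioc_right htT)).const_mul _) hpointwise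
      _ = lam / 2 * ∫ s in (0:ℝ)..t, ‖q s‖ ^ 2 := by
          rw [intervalIntegral.integral_const_mul]
          ring
      _ ≤ lam / 2 * ∫ s in (0:ℝ)..T, ‖q s‖ ^ 2 := by
          gcongr
          exact intervalIntegral.integral_mono_interval le_rfl ht0 htT
            (Filter.Eventually.of_forall fun s ↦ sq_nonneg _)
            ((intervalIntegrable_iff_integrableOn_Ioc_of_le (ht0.trans htT)).2 hq)
  have hq_nonneg : 0 ≤ ∫ s in (0:ℝ)..T, ‖q s‖ ^ 2 :=
    intervalIntegral.integral_nonneg (ht0.trans htT) fun s _ ↦ sq_nonneg _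
  calc ‖σlam t - σ t‖ ^ 2 ≤ ‖C‖ ^ 2 / γC * ⟪A (σlam t - σ t), σlam t - σ t⟫ :=
        norm_sq_le_of_coercive_left_inverse hCA hγC hCcoer _
    _ ≤ ‖C‖ ^ 2 / γC * (lam / 2 * ∫ s in (0:ℝ)..T, ‖q s‖ ^ 2) := by gcongr
    _ ≤ lam * (‖C‖ ^ 2 / γC) * ∫ s in (0:ℝ)..T, ‖q s‖ ^ 2 := by
        rw [mul_left_comm, ← mul_assoc]
        gcongr
        linarith

/-- Uniform-in-time error estimate for the Yosida regularization of the perfectly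
plastic flow rule: if `σ_λ` solves `𝔸σ̇_λ = w − λ⁻¹(σ_λ − π(σ_λ))` and `σ` solves
the unregularized flow rule `w − 𝔸σ̇ ∈ ∂I_K(σ)` with common initial value `σ₀ ∈ K`,
then `‖σ_λ(t) − σ(t)‖² ≤ λ(‖ℂ‖²/γ_ℂ)∫₀ᵀ‖w − 𝔸σ̇‖² ds` for every `t ∈ [0,T]`. -/
theorem yosida_regularization_error_estimate
    {H : Type*} [NormedAddCommGroup H] [InnerProductSpace ℝ H] [CompleteSpace H]
    (K : Set H) (hK : K.Nonempty) (hKclosed : IsClosed K) (hKconv : Convex ℝ K)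
    (π : H → H) (hπK : ∀ x, π x ∈ K)
    (hπ : ∀ x, ∀ k ∈ K, ⟪x - π x, k - π x⟫ ≤ 0)
    (A C : H →L[ℝ] H)
    (hAsym : ∀ x y, ⟪A x, y⟫ = ⟪x, A y⟫) (hCsym : ∀ x y, ⟪C x, y⟫ = ⟪x, C y⟫)
    (hCA : ∀ x, C (A x) = x) (hAC : ∀ x, A (C x) = x)
    (γC : ℝ) (hγC : 0 < γC) (hCcoer : ∀ h : H, γC * ‖h‖ ^ 2 ≤ ⟪C h, h⟫)
    (lam T : ℝ) (hlam : 0 < lam) (hT : 0 < T)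
    (w : ℝ → H) (hw : MemLp w 2 (volume.restrict (Set.Ioo 0 T)))
    (σ₀ : H) (hσ₀ : σ₀ ∈ K)
    (σlam σ σlam' σ' : ℝ → H)
    (hσlam : IsH1Curve T σlam σlam') (hσ : IsH1Curve T σ σ')
    (hinitlam : σlam 0 = σ₀) (hinit : σ 0 = σ₀)
    (heqlam : ∀ᵐ t ∂(volume.restrict (Set.Ioo 0 T)),
      A (σlam' t) = w t - lam⁻¹ • (σlam t - π (σlam t)))
    (heq : ∀ᵐ t ∂(volume.restrict (Set.Ioo 0 T)),
      σ t ∈ K ∧ ∀ τ ∈ K, ⟪w t - A (σ' t), τ - σ t⟫ ≤ 0) :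
    ∀ t ∈ Set.Icc 0 T,
      ‖σlam t - σ t‖ ^ 2 ≤
        lam * (‖C‖ ^ 2 / γC) * ∫ s in (0:ℝ)..T, ‖w s - A (σ' s)‖ ^ 2 :=
  yosida_regularization_error_estimate_general K π hπK hπ A C hAsym hCA γC hγC hCcoer lam T hlam w
    hw σ₀ σlam σ σlam' σ' hσlam hσ hinitlam hinit heqlam heq
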